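/- Gluing Lemma: Let λ be the density of an SK-metric on a domain G, and μ the density of an SK-metric on an open subset U ⊆ G satisfying limsup_{U ∋ z → ξ} μ(z) ≤ λ(ξ) for every ξ ∈ ∂U ∩ G. Then σ defined by σ(z) = max{λ(z), μ(z)} for z ∈ U and σ(z) = λ(z) for z ∈ G∖U is the density of an SK-metric on G. -/

import Mathlib

open Filter Set

/-- Generalized lower Laplace operator of a function `u : ℂ → ℝ` at `z`,
with values in `EReal`:
`liminf_{r→0⁺} (4/r²)((1/2π)∫₀^{2π} u(z+re^{it})dt − u(z))`. -/
noncomputable def genLap (u : ℂ → ℝ) (z : ℂ) : EReal :=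
  Filter.liminf
    (fun r : ℝ =>
      (((4 / r ^ 2) *
        ((1 / (2 * Real.pi)) *
          (∫ t in (0 : ℝ)..(2 * Real.pi),
            u (z + (r : ℂ) * Complex.exp ((t : ℂ) * Complex.I))) - u z) : ℝ) : EReal))
    (nhdsWithin 0 (Set.Ioi (0 : ℝ)))

lemma genLap_mono {u v : ℂ → ℝ} {z : ℂ} {δ : ℝ} (hδ : 0 < δ)
    (hzz : v z = u z)
    (hle : ∀ w ∈ Metric.ball z δ, v w ≤ u w)
    (hu : ContinuousOn u (Metric.ball z δ))
    (hv : ContinuousOn v (Metric.ball z δ)) :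
    genLap v z ≤ genLap u z := by
  unfold genLap
  refine Filter.liminf_le_liminf ?_
  filter_upwards [Ioo_mem_nhdsGT_of_mem (show (0:ℝ) ∈ Ico (0:ℝ) δ from ⟨le_refl _, hδ⟩)]
    with r hr
  obtain ⟨hr0, hrδ⟩ := hr
  have hmem : ∀ t : ℝ, z + (r : ℂ) * Complex.exp ((t : ℂ) * Complex.I) ∈ Metric.ball z δ := by
    intro t
    rw [Metric.mem_ball, dist_eq_norm, add_sub_cancel_left, norm_mul,
      Complex.norm_exp_ofReal_mul_I, mul_one, Complex.norm_real, Real.norm_eq_abs, abs_of_pos hr0]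
    exact hrδ
  have hcont : Continuous fun t : ℝ => z + (r : ℂ) * Complex.exp ((t : ℂ) * Complex.I) := by
    continuity
  have hiu : IntervalIntegrable
      (fun t : ℝ => u (z + (r : ℂ) * Complex.exp ((t : ℂ) * Complex.I)))
      MeasureTheory.volume 0 (2 * Real.pi) :=
    (hu.comp hcont.continuousOn (fun t _ => hmem t)).intervalIntegrable
  have hiv : IntervalIntegrable
      (fun t : ℝ => v (z + (r : ℂ) * Complex.exp ((t : ℂ) * Complex.I)))
      MeasureTheory.volume 0 (2 * Real.pi) :=
    (hv.comp hcont.continuousOn (fun t _ => hmem t)).intervalIntegrable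
  have hint : (∫ t in (0:ℝ)..(2 * Real.pi),
        v (z + (r : ℂ) * Complex.exp ((t : ℂ) * Complex.I)))
      ≤ ∫ t in (0:ℝ)..(2 * Real.pi),
        u (z + (r : ℂ) * Complex.exp ((t : ℂ) * Complex.I)) :=
    intervalIntegral.integral_mono_on (by positivity) hiv hiu
      (fun t _ => hle _ (hmem t))
  rw [EReal.coe_le_coe_iff, hzz]
  have h1 : (0:ℝ) ≤ 4 / r ^ 2 := by positivity
  have h2 : (0:ℝ) ≤ 1 / (2 * Real.pi) := by positivity
  gcongr

open Classical in
/-- Gluing Lemma: gluing an SK-metric `μ` on an open subset `U ⊆ G` (whose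
density is dominated by `λ` at `∂U ∩ G`) onto an SK-metric `λ` on `G` via
`σ = max(λ,μ)` on `U`, `σ = λ` off `U`, yields an SK-metric on `G`. -/
theorem gluing_lemma (G U : Set ℂ) (hG : IsOpen G) (hGc : IsConnected G)
    (hU : IsOpen U) (hUG : U ⊆ G)
    (lam mu : ℂ → ℝ)
    (hlc : ContinuousOn lam G) (hln : ∀ z ∈ G, 0 ≤ lam z)
    (hlne : ¬∀ z ∈ G, lam z = 0)
    (hlcurv : ∀ z ∈ G, 0 < lam z →
      ((lam z ^ 2 : ℝ) : EReal) ≤ genLap (fun w => Real.log (lam w)) z)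
    (hmc : ContinuousOn mu U) (hmn : ∀ z ∈ U, 0 ≤ mu z)
    (hmne : ¬∀ z ∈ U, mu z = 0)
    (hmcurv : ∀ z ∈ U, 0 < mu z →
      ((mu z ^ 2 : ℝ) : EReal) ≤ genLap (fun w => Real.log (mu w)) z)
    (hglue : ∀ ξ ∈ frontier U ∩ G,
      Filter.limsup (fun z => ((mu z : ℝ) : EReal)) (nhdsWithin ξ U)
        ≤ ((lam ξ : ℝ) : EReal)) :
    ContinuousOn (fun z => if z ∈ U then max (lam z) (mu z) else lam z) G ∧
    (∀ z ∈ G, 0 < (if z ∈ U then max (lam z) (mu z) else lam z) →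
      (((if z ∈ U then max (lam z) (mu z) else lam z) ^ 2 : ℝ) : EReal)
        ≤ genLap (fun w => Real.log
            (if w ∈ U then max (lam w) (mu w) else lam w)) z) := by
  set σ : ℂ → ℝ := fun z => if z ∈ U then max (lam z) (mu z) else lam z with hσdef
  -- σ ≥ lam on G
  have hσge : ∀ z, lam z ≤ σ z := by
    intro z
    by_cases hz : z ∈ U <;> simp [hσdef, hz]
  -- continuity
  have hcontσ : ContinuousOn σ G := by
    intro z hz
    by_cases hzU : z ∈ U
    · -- interior of U
      have h1 : ContinuousAt (fun w => max (lam w) (mu w)) z :=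
        (hlc.continuousAt (hG.mem_nhds hz)).max (hmc.continuousAt (hU.mem_nhds hzU))
      have h2 : σ =ᶠ[nhds z] fun w => max (lam w) (mu w) := by
        filter_upwards [hU.mem_nhds hzU] with w hw
        simp [hσdef, hw]
      exact ((h1.congr h2.symm)).continuousWithinAt
    by_cases hzC : z ∈ closure U
    · -- boundary point
      have hzF : z ∈ frontier U ∩ G := ⟨by rw [hU.frontier_eq]; exact ⟨hzC, hzU⟩, hz⟩
      have hlamz : Tendsto lam (nhdsWithin z G) (nhds (lam z)) := hlc z hz
      have hlamU : Tendsto lam (nhdsWithin z U) (nhds (lam z)) :=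
        hlamz.mono_left (nhdsWithin_mono _ hUG)
      have hmax : Tendsto (fun w => max (lam w) (mu w)) (nhdsWithin z U) (nhds (lam z)) := by
        rw [tendsto_order]
        constructor
        · intro b hb
          filter_upwards [(tendsto_order.1 hlamU).1 b hb] with w hw
          exact lt_of_lt_of_le hw (le_max_left _ _)
        · intro b hb
          have hmu : ∀ᶠ w in nhdsWithin z U, mu w < b := by
            have hlim : Filter.limsup (fun w => ((mu w : ℝ) : EReal)) (nhdsWithin z U)
                < ((b : ℝ) : EReal) :=
              lt_of_le_of_lt (hglue z hzF) (EReal.coe_lt_coe_iff.2 hb)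
            filter_upwards [Filter.eventually_lt_of_limsup_lt hlim] with w hw
            exact EReal.coe_lt_coe_iff.1 hw
          filter_upwards [(tendsto_order.1 hlamU).2 b hb, hmu] with w h1 h2
          exact max_lt h1 h2
      have hσU : Tendsto σ (nhdsWithin z U) (nhds (lam z)) := by
        refine hmax.congr' ?_
        filter_upwards [self_mem_nhdsWithin] with w hw
        simp [hσdef, hw]
      have hσGU : Tendsto σ (nhdsWithin z (G \ U)) (nhds (lam z)) := by
        refine (hlamz.mono_left (nhdsWithin_mono _ diff_subset)).congr' ?_
        filter_upwards [self_mem_nhdsWithin] with w hw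
        simp [hσdef, hw.2]
      have hGeq : (G : Set ℂ) ⊆ U ∪ (G \ U) := by
        intro w hw
        by_cases h : w ∈ U
        · exact Or.inl h
        · exact Or.inr ⟨hw, h⟩
      have : Tendsto σ (nhdsWithin z G) (nhds (lam z)) := by
        refine Tendsto.mono_left ?_ (nhdsWithin_mono _ hGeq)
        rw [nhdsWithin_union]
        exact tendsto_sup.2 ⟨hσU, hσGU⟩
      have hσz : σ z = lam z := by simp [hσdef, hzU]
      rw [ContinuousWithinAt, hσz]
      exact this
    · -- away from closure U
      have hnb : (closure U)ᶜ ∈ nhds z := (isClosed_closure.isOpen_compl).mem_nhds hzC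
      have h2 : σ =ᶠ[nhds z] lam := by
        filter_upwards [hnb] with w hw
        have : w ∉ U := fun h => hw (subset_closure h)
        simp [hσdef, this]
      exact ((hlc.continuousAt (hG.mem_nhds hz)).congr h2.symm).continuousWithinAt
  refine ⟨hcontσ, ?_⟩
  intro z hz hσpos
  have hσpos' : 0 < σ z := hσpos
  by_cases hcase : z ∈ U ∧ lam z < mu z
  · -- σ z = mu z, compare with mu
    obtain ⟨hzU, hlm⟩ := hcase
    have hσz : σ z = mu z := by simp [hσdef, hzU, max_eq_right hlm.le]
    have hmupos : 0 < mu z := lt_of_le_of_lt (hln z hz) hlm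
    -- choose δ : ball ⊆ U, mu > 0 on ball
    have : ∀ᶠ w in nhds z, w ∈ U ∧ 0 < mu w := by
      have h1 : ∀ᶠ w in nhds z, 0 < mu w :=
        (hmc.continuousAt (hU.mem_nhds hzU)).eventually (eventually_gt_nhds hmupos)
      filter_upwards [hU.mem_nhds hzU, h1] with w h h' using ⟨h, h'⟩
    obtain ⟨δ, hδ, hball⟩ := Metric.eventually_nhds_iff_ball.1 this
    have key : genLap (fun w => Real.log (mu w)) z ≤ genLap (fun w => Real.log (σ w)) z := by
      refine genLap_mono hδ (by rw [hσz]) ?_ ?_ ?_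
      · intro w hw
        obtain ⟨hwU, hwp⟩ := hball w hw
        have : mu w ≤ σ w := by simp [hσdef, hwU]
        exact Real.log_le_log hwp this
      · refine Real.continuousOn_log.comp (hcontσ.mono ?_) ?_
        · exact fun w hw => hUG (hball w hw).1
        · intro w hw
          exact ne_of_gt (lt_of_lt_of_le (hball w hw).2 (by simp [hσdef, (hball w hw).1]))
      · refine Real.continuousOn_log.comp (hmc.mono ?_) ?_
        · exact fun w hw => (hball w hw).1
        · exact fun w hw => ne_of_gt (hball w hw).2
    calc ((σ z ^ 2 : ℝ) : EReal) = (((mu z) ^ 2 : ℝ) : EReal) := by rw [hσz]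
      _ ≤ genLap (fun w => Real.log (mu w)) z := hmcurv z hzU hmupos
      _ ≤ _ := key
  · -- σ z = lam z, compare with lam
    have hσz : σ z = lam z := by
      by_cases hzU : z ∈ U
      · have : mu z ≤ lam z := by
          by_contra h
          exact hcase ⟨hzU, lt_of_not_ge h⟩
        simp [hσdef, hzU, max_eq_left this]
      · simp [hσdef, hzU]
    have hlampos : 0 < lam z := hσz ▸ hσpos'
    have : ∀ᶠ w in nhds z, w ∈ G ∧ 0 < lam w := by
      have h1 : ∀ᶠ w in nhds z, 0 < lam w :=
        (hlc.continuousAt (hG.mem_nhds hz)).eventually (eventually_gt_nhds hlampos)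
      filter_upwards [hG.mem_nhds hz, h1] with w h h' using ⟨h, h'⟩
    obtain ⟨δ, hδ, hball⟩ := Metric.eventually_nhds_iff_ball.1 this
    have key : genLap (fun w => Real.log (lam w)) z ≤ genLap (fun w => Real.log (σ w)) z := by
      refine genLap_mono hδ (by rw [hσz]) ?_ ?_ ?_
      · intro w hw
        exact Real.log_le_log (hball w hw).2 (hσge w)
      · refine Real.continuousOn_log.comp (hcontσ.mono ?_) ?_
        · exact fun w hw => (hball w hw).1
        · intro w hw
          exact ne_of_gt (lt_of_lt_of_le (hball w hw).2 (hσge w))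
      · refine Real.continuousOn_log.comp (hlc.mono ?_) ?_
        · exact fun w hw => (hball w hw).1
        · exact fun w hw => ne_of_gt (hball w hw).2
    calc ((σ z ^ 2 : ℝ) : EReal) = (((lam z) ^ 2 : ℝ) : EReal) := by rw [hσz]
      _ ≤ genLap (fun w => Real.log (lam w)) z := hlcurv z hz hlampos
      _ ≤ _ := key
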